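/- In a topological space X, every e*-θ-open set coincides with being e*-regular (i.e., e*θO(X) = e*R(X)) if and only if e*-cl_θ(A) is e*-regular for every subset A of X. -/

import Mathlib

/-!
The e*-θ-closure is idempotent, because the e*-closure of an e*-open set is again e*-open;
hence every e*-θ-closure is e*-θ-closed, and the e*-θ-open sets are exactly the complements of
e*-θ-closures. Independently, every e*-regular set is e*-θ-open, since an e*-open, e*-closed set
is its own e*-closure. So e*θO(X) = e*R(X) says precisely that complements of e*-θ-closures are
e*-regular, and e*-regularity is invariant under complement.
-/

open Set Topology

variable {X : Type*} [TopologicalSpace X]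

/-- δ-closure of A. -/
def deltaCl (A : Set X) : Set X :=
  {x | ∀ U : Set X, IsOpen U → x ∈ U → (interior (closure U) ∩ A).Nonempty}

/-- A is e*-open if A ⊆ cl(int(δ-cl A)). -/
def EStarOpen (A : Set X) : Prop := A ⊆ closure (interior (deltaCl A))

/-- A is e*-closed if its complement is e*-open. -/
def EStarClosed (A : Set X) : Prop := EStarOpen Aᶜ

/-- e*-closure: intersection of all e*-closed supersets. -/
def eStarCl (A : Set X) : Set X := ⋂₀ {F | EStarClosed F ∧ A ⊆ F}

/-- e*-interior: union of all e*-open subsets. -/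
def eStarInt (A : Set X) : Set X := ⋃₀ {U | EStarOpen U ∧ U ⊆ A}

/-- e*-regular: both e*-open and e*-closed. -/
def EStarRegular (A : Set X) : Prop := EStarOpen A ∧ EStarClosed A

/-- e*-θ-closure. -/
def eStarClTheta (A : Set X) : Set X :=
  {x | ∀ U : Set X, EStarOpen U → x ∈ U → (eStarCl U ∩ A).Nonempty}

/-- e*-θ-closed. -/
def EStarThetaClosed (A : Set X) : Prop := A = eStarClTheta A

/-- e*-θ-open. -/
def EStarThetaOpen (A : Set X) : Prop := EStarThetaClosed Aᶜ

/-- quasi e*-θ-closed. -/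
def QEStarThetaClosed (A : Set X) : Prop :=
  ∀ U : Set X, EStarThetaOpen U → A ⊆ U → eStarClTheta A ⊆ U

/-- e*-θ-kernel. -/
def eStarKerTheta (A : Set X) : Set X := ⋂₀ {U | EStarThetaOpen U ∧ A ⊆ U}

lemma deltaCl_mono {A B : Set X} (h : A ⊆ B) : deltaCl A ⊆ deltaCl B :=
  fun _ hx U hU hxU => (hx U hU hxU).mono (inter_subset_inter_right _ h)

lemma subset_deltaCl (A : Set X) : A ⊆ deltaCl A :=
  fun x hx _ hU hxU => ⟨x, interior_maximal subset_closure hU hxU, hx⟩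

lemma closure_interior_deltaCl_mono {A B : Set X} (h : A ⊆ B) :
    closure (interior (deltaCl A)) ⊆ closure (interior (deltaCl B)) :=
  closure_mono (interior_mono (deltaCl_mono h))

lemma IsOpen.eStarOpen {U : Set X} (hU : IsOpen U) : EStarOpen U :=
  fun _ hx => subset_closure (interior_maximal (subset_deltaCl U) hU hx)

lemma IsClosed.eStarClosed {F : Set X} (hF : IsClosed F) : EStarClosed F :=
  hF.isOpen_compl.eStarOpen

lemma eStarOpen_sUnion {S : Set (Set X)} (hS : ∀ U ∈ S, EStarOpen U) : EStarOpen (⋃₀ S) := by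
  rintro x ⟨U, hUS, hxU⟩
  exact closure_interior_deltaCl_mono (subset_sUnion_of_mem hUS) (hS U hUS hxU)

lemma eStarClosed_sInter {S : Set (Set X)} (hS : ∀ F ∈ S, EStarClosed F) :
    EStarClosed (⋂₀ S) := by
  rw [EStarClosed, compl_sInter]
  exact eStarOpen_sUnion (forall_mem_image.2 hS)

lemma EStarRegular.compl {A : Set X} (h : EStarRegular A) : EStarRegular Aᶜ :=
  ⟨h.2, by rw [EStarClosed, compl_compl]; exact h.1⟩

lemma eStarRegular_compl_iff {A : Set X} : EStarRegular Aᶜ ↔ EStarRegular A :=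
  ⟨fun h => compl_compl A ▸ h.compl, EStarRegular.compl⟩

lemma subset_eStarCl (A : Set X) : A ⊆ eStarCl A :=
  subset_sInter fun _ hF => hF.2

lemma eStarCl_subset {A F : Set X} (hF : EStarClosed F) (h : A ⊆ F) : eStarCl A ⊆ F :=
  sInter_subset_of_mem ⟨hF, h⟩

lemma eStarClosed_eStarCl (A : Set X) : EStarClosed (eStarCl A) :=
  eStarClosed_sInter fun _ hF => hF.1

lemma EStarClosed.eStarCl_eq {A : Set X} (h : EStarClosed A) : eStarCl A = A :=
  (eStarCl_subset h subset_rfl).antisymm (subset_eStarCl A)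

lemma EStarOpen.eStarCl {U : Set X} (hU : EStarOpen U) : EStarOpen (eStarCl U) := fun _ hx =>
  closure_interior_deltaCl_mono (subset_eStarCl U)
    (eStarCl_subset isClosed_closure.eStarClosed hU hx)

lemma subset_eStarClTheta (A : Set X) : A ⊆ eStarClTheta A :=
  fun x hx U _ hxU => ⟨x, subset_eStarCl U hxU, hx⟩

lemma eStarClTheta_eStarClTheta (A : Set X) :
    eStarClTheta (eStarClTheta A) = eStarClTheta A := by
  refine Subset.antisymm (fun x hx U hU hxU => ?_) (subset_eStarClTheta _)
  obtain ⟨y, hyU, hyA⟩ := hx U hU hxU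
  simpa only [(eStarClosed_eStarCl U).eStarCl_eq] using hyA _ hU.eStarCl hyU

lemma eStarThetaOpen_compl_eStarClTheta (A : Set X) : EStarThetaOpen (eStarClTheta A)ᶜ := by
  rw [EStarThetaOpen, EStarThetaClosed, compl_compl, eStarClTheta_eStarClTheta]

lemma EStarRegular.eStarThetaOpen {A : Set X} (hA : EStarRegular A) : EStarThetaOpen A := by
  refine (subset_eStarClTheta Aᶜ).antisymm fun x hx => ?_
  by_contra hxA
  obtain ⟨y, hyA, hyAc⟩ := hx A hA.1 (not_not.1 hxA)
  exact hyAc (hA.2.eStarCl_eq ▸ hyA)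

theorem stmt11 :
    (∀ A : Set X, EStarThetaOpen A ↔ EStarRegular A) ↔
    (∀ A : Set X, EStarRegular (eStarClTheta A)) := by
  constructor
  · intro h A
    exact eStarRegular_compl_iff.1 ((h _).1 (eStarThetaOpen_compl_eStarClTheta A))
  · intro h A
    refine ⟨fun hA => ?_, EStarRegular.eStarThetaOpen⟩
    have hAc : EStarRegular Aᶜ := by
      rw [EStarThetaOpen, EStarThetaClosed] at hA
      exact hA ▸ h Aᶜ
    exact eStarRegular_compl_iff.1 hAc
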